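/- arXiv:2602.00645 — 9 statements merged into one kernel-verified Lean document; each statement's English description precedes it below -/
import Mathlib

section
/- Let (X,d) be a complete metric space and let A, B be nonempty closed subsets of X. Suppose that the set A_0 = {x ∈ A : d(x,y) = d(A,B) for some y ∈ B} has at least three elements, and let T : A → B be a continuous perimetric proximal contraction of the first kind such that T(A_0) ⊆ B_0, where B_0 = {y ∈ B : d(x,y) = d(A,B) for some x ∈ A}. If T satisfies Condition Λ, then there exists a point u ∈ A with d(u, Tu) = d(A,B), i.e., T possesses a best proximity point. -/
open Metric Filter Topology Set

/-- The distance between two sets: `d(A,B) = inf {d(a,b) : a ∈ A, b ∈ B}`. -/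
noncomputable def setDist {X : Type*} [MetricSpace X] (A B : Set X) : ℝ :=
  sInf (Set.image2 dist A B)

/-- `T` is a proximal contraction of the first kind with constant `α`. -/
def ProxContrFirst {X : Type*} [MetricSpace X] (A B : Set X) (T : X → X) (α : ℝ) : Prop :=
  ∀ u₁ ∈ A, ∀ u₂ ∈ A, ∀ x₁ ∈ A, ∀ x₂ ∈ A,
    dist u₁ (T x₁) = setDist A B → dist u₂ (T x₂) = setDist A B →
    dist u₁ u₂ ≤ α * dist x₁ x₂

/-- `T` is a perimetric proximal contraction of the first kind with constant `α`. -/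
def PerimProxContrFirst {X : Type*} [MetricSpace X] (A B : Set X) (T : X → X) (α : ℝ) : Prop :=
  ∀ u₁ ∈ A, ∀ u₂ ∈ A, ∀ u₃ ∈ A, ∀ x₁ ∈ A, ∀ x₂ ∈ A, ∀ x₃ ∈ A,
    x₁ ≠ x₂ → x₂ ≠ x₃ → x₁ ≠ x₃ →
    dist u₁ (T x₁) = setDist A B → dist u₂ (T x₂) = setDist A B →
    dist u₃ (T x₃) = setDist A B →
    dist u₁ u₂ + dist u₂ u₃ + dist u₃ u₁ ≤
      α * (dist x₁ x₂ + dist x₂ x₃ + dist x₃ x₁)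

/-- `T` is a perimetric proximal contraction of the second kind with constant `α`. -/
def PerimProxContrSecond {X : Type*} [MetricSpace X] (A B : Set X) (T : X → X) (α : ℝ) : Prop :=
  ∀ u₁ ∈ A, ∀ u₂ ∈ A, ∀ u₃ ∈ A, ∀ x₁ ∈ A, ∀ x₂ ∈ A, ∀ x₃ ∈ A,
    T x₁ ≠ T x₂ → T x₂ ≠ T x₃ → T x₁ ≠ T x₃ →
    dist u₁ (T x₁) = setDist A B → dist u₂ (T x₂) = setDist A B →
    dist u₃ (T x₃) = setDist A B →
    dist (T u₁) (T u₂) + dist (T u₂) (T u₃) + dist (T u₃) (T u₁) ≤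
      α * (dist (T x₁) (T x₂) + dist (T x₂) (T x₃) + dist (T x₃) (T x₁))

/-- Condition Λ: there is no pair of distinct points `x, y ∈ A` with
`d(x,Ty) = d(y,Tx) = d(A,B)`. -/
def CondLambda {X : Type*} [MetricSpace X] (A B : Set X) (T : X → X) : Prop :=
  ¬ ∃ x ∈ A, ∃ y ∈ A, x ≠ y ∧
      dist x (T y) = setDist A B ∧ dist y (T x) = setDist A B

/-- `A` is approximatively compact with respect to `B`. -/
def ApproxCompactWRT {X : Type*} [MetricSpace X] (A B : Set X) : Prop :=
  ∀ u ∈ B, ∀ s : ℕ → X, (∀ n, s n ∈ A) →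
    Filter.Tendsto (fun n => dist u (s n)) Filter.atTop (nhds (Metric.infDist u A)) →
    ∃ v : X, ∃ φ : ℕ → ℕ, StrictMono φ ∧
      Filter.Tendsto (s ∘ φ) Filter.atTop (nhds v)

theorem stmt0 {X : Type*} [MetricSpace X] [CompleteSpace X]
    (A B : Set X) (hA : A.Nonempty) (hB : B.Nonempty)
    (hAc : IsClosed A) (hBc : IsClosed B)
    (T : X → X) (hTmaps : Set.MapsTo T A B) (hTcont : ContinuousOn T A)
    (hT : ∃ α : ℝ, 0 ≤ α ∧ α < 1 ∧ PerimProxContrFirst A B T α)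
    (A₀ : Set X) (hA₀ : A₀ = {x ∈ A | ∃ y ∈ B, dist x y = setDist A B})
    (B₀ : Set X) (hB₀ : B₀ = {y ∈ B | ∃ x ∈ A, dist x y = setDist A B})
    (hcard : ∃ a ∈ A₀, ∃ b ∈ A₀, ∃ c ∈ A₀, a ≠ b ∧ a ≠ c ∧ b ≠ c)
    (hTA₀ : Set.MapsTo T A₀ B₀)
    (hΛ : CondLambda A B T) :
    ∃ u ∈ A, dist u (T u) = setDist A B := by
    classical
  obtain ⟨α, hα0, hα1, hcontr⟩ := hT
  have hA₀A : A₀ ⊆ A := by rw [hA₀]; intro x hx; exact hx.1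
  have step : ∀ x : {x // x ∈ A₀}, ∃ u : {x // x ∈ A₀},
      dist (u : X) (T x) = setDist A B := by
    rintro ⟨x, hx⟩
    have hTx := hTA₀ hx
    rw [hB₀] at hTx
    obtain ⟨hTxB, u, huA, hud⟩ := hTx
    exact ⟨⟨u, by rw [hA₀]; exact ⟨huA, T x, hTxB, hud⟩⟩, hud⟩
  choose F hF using step
  obtain ⟨a, ha, -⟩ := hcard
  set x : ℕ → {x // x ∈ A₀} := fun n => F^[n] ⟨a, ha⟩ with hxdef
  have hstep : ∀ n, dist (x (n+1) : X) (T (x n)) = setDist A B := by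
    intro n
    have h : x (n+1) = F (x n) := by
      simp only [hxdef, Function.iterate_succ_apply']
    rw [h]; exact hF _
  by_cases hfix : ∃ n, x (n+1) = x n
  · obtain ⟨n, hn⟩ := hfix
    refine ⟨(x n : X), hA₀A (x n).2, ?_⟩
    nth_rewrite 1 [← hn]
    exact hstep n
  push_neg at hfix
  have hne1 : ∀ n, (x (n+1) : X) ≠ x n := fun n h => hfix n (Subtype.ext h)
  have hne2 : ∀ n, (x (n+2) : X) ≠ x n := by
    intro n hn
    exact hΛ ⟨x n, hA₀A (x n).2, x (n+1), hA₀A (x (n+1)).2,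
      (hne1 n).symm, by rw [← hn]; exact hstep (n+1), hstep n⟩
  set p : ℕ → ℝ := fun n =>
    dist (x n : X) (x (n+1)) + dist (x (n+1) : X) (x (n+2)) +
      dist (x (n+2) : X) (x n) with hpdef
  have hcontra : ∀ n, p (n+1) ≤ α * p n := by
    intro n
    exact hcontr (x (n+1)) (hA₀A (x (n+1)).2) (x (n+2)) (hA₀A (x (n+2)).2)
      (x (n+3)) (hA₀A (x (n+3)).2) (x n) (hA₀A (x n).2)
      (x (n+1)) (hA₀A (x (n+1)).2) (x (n+2)) (hA₀A (x (n+2)).2)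
      (hne1 n).symm (hne1 (n+1)).symm (hne2 n).symm
      (hstep n) (hstep (n+1)) (hstep (n+2))
  have hgeo : ∀ n, p n ≤ p 0 * α ^ n := by
    intro n
    induction n with
    | zero => simp
    | succ k ih =>
      calc p (k+1) ≤ α * p k := hcontra k
        _ ≤ α * (p 0 * α ^ k) := by
            exact mul_le_mul_of_nonneg_left ih hα0
        _ = p 0 * α ^ (k+1) := by ring
  have hdb : ∀ n, dist (x n : X) (x (n+1)) ≤ p 0 * α ^ n := by
    intro n
    refine le_trans ?_ (hgeo n)
    have h1 : (0:ℝ) ≤ dist (x (n+1) : X) (x (n+2)) := dist_nonneg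
    have h2 : (0:ℝ) ≤ dist (x (n+2) : X) (x n) := dist_nonneg
    simp only [hpdef]; linarith
  have hcauchy : CauchySeq (fun n => (x n : X)) :=
    cauchySeq_of_le_geometric α (p 0) hα1 hdb
  obtain ⟨u, hu⟩ := cauchySeq_tendsto_of_complete hcauchy
  have huA : u ∈ A :=
    hAc.mem_of_tendsto hu (Filter.Eventually.of_forall fun n => hA₀A (x n).2)
  have huw : Filter.Tendsto (fun n => (x n : X)) Filter.atTop (nhdsWithin u A) :=
    tendsto_nhdsWithin_of_tendsto_nhds_of_eventually_within _ hu
      (Filter.Eventually.of_forall fun n => hA₀A (x n).2)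
  have hTu : Filter.Tendsto (fun n => T (x n : X)) Filter.atTop (nhds (T u)) :=
    (hTcont u huA).tendsto.comp huw
  have hu1 : Filter.Tendsto (fun n => (x (n+1) : X)) Filter.atTop (nhds u) :=
    hu.comp (Filter.tendsto_add_atTop_nat 1)
  have hlim : Filter.Tendsto (fun n => dist (x (n+1) : X) (T (x n)))
      Filter.atTop (nhds (dist u (T u))) := hu1.dist hTu
  have hconst : Filter.Tendsto (fun n => dist (x (n+1) : X) (T (x n)))
      Filter.atTop (nhds (setDist A B)) := by
    simp only [hstep]
    exact (tendsto_const_nhds :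
      Filter.Tendsto (fun _ : ℕ => setDist A B) Filter.atTop (nhds (setDist A B)))
  exact ⟨u, huA, tendsto_nhds_unique hlim hconst⟩
end

section
/- Let (X,d) be a metric space, let A, B be nonempty subsets of X, and let T : A → B be a perimetric proximal contraction of the first kind. Then T has at most two best proximity points; that is, there do not exist three pairwise distinct points x, y, z ∈ A with d(x,Tx) = d(y,Ty) = d(z,Tz) = d(A,B). -/
open Metric Filter Topology Set

theorem stmt1 {X : Type*} [MetricSpace X]
    (A B : Set X) (hA : A.Nonempty) (hB : B.Nonempty)
    (T : X → X) (hTmaps : Set.MapsTo T A B)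
    (hT : ∃ α : ℝ, 0 ≤ α ∧ α < 1 ∧ PerimProxContrFirst A B T α) :
    ¬ ∃ x ∈ A, ∃ y ∈ A, ∃ z ∈ A, x ≠ y ∧ y ≠ z ∧ x ≠ z ∧
        dist x (T x) = setDist A B ∧ dist y (T y) = setDist A B ∧
        dist z (T z) = setDist A B := by
  rintro ⟨x, hx, y, hy, z, hz, hxy, hyz, hxz, hdx, hdy, hdz⟩
  obtain ⟨α, hα0, hα1, hP⟩ := hT
  have key := hP x hx y hy z hz x hx y hy z hz hxy hyz hxz hdx hdy hdz
  have hpos : 0 < dist x y + dist y z + dist z x := by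
    have := dist_pos.mpr hxy
    positivity
  have : dist x y + dist y z + dist z x ≤ α * (dist x y + dist y z + dist z x) := by
    have h1 : dist z x = dist x z := dist_comm z x
    linarith [key, h1]
  nlinarith
end

section
/- Let (X,d) be a complete metric space with at least three points and let T : X → X be a mapping contracting perimeters of triangles on X. If T does not possess any periodic point of prime period 2, then T has a fixed point in X. -/
open Metric Filter Topology Set

theorem stmt2 {X : Type*} [MetricSpace X] [CompleteSpace X]
    (hX : ∃ x y z : X, x ≠ y ∧ y ≠ z ∧ x ≠ z)
    (T : X → X)
    (hT : ∃ α : ℝ, 0 ≤ α ∧ α < 1 ∧ ∀ x y z : X, x ≠ y → y ≠ z → x ≠ z →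
      dist (T x) (T y) + dist (T y) (T z) + dist (T z) (T x) ≤
        α * (dist x y + dist y z + dist z x))
    (hper : ¬ ∃ x : X, T (T x) = x ∧ T x ≠ x) :
    ∃ x : X, T x = x := by
  obtain ⟨α, hα0, hα1, hc⟩ := hT
  obtain ⟨x₀, -, -, -⟩ := hX
  set s : ℕ → X := fun n => T^[n] x₀ with hsdef
  have hstep : ∀ n, s (n+1) = T (s n) := fun n => Function.iterate_succ_apply' T n x₀
  by_cases hfix : ∃ n, T (s n) = s n
  · obtain ⟨n, hn⟩ := hfix; exact ⟨s n, hn⟩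
  push_neg at hfix
  have h1 : ∀ n, s (n+1) ≠ s n := fun n => by rw [hstep]; exact hfix n
  have h2 : ∀ n, s (n+2) ≠ s n := by
    intro n h
    apply hper
    refine ⟨s n, ?_, hfix n⟩
    have : s (n+2) = T (T (s n)) := by rw [hstep, hstep]
    rw [← this, h]
  set p : ℕ → ℝ := fun n => dist (s n) (s (n+1)) + dist (s (n+1)) (s (n+2)) + dist (s (n+2)) (s n) with hpdef
  have hcontr : ∀ n, p (n+1) ≤ α * p n := by
    intro n
    have hco := hc (s n) (s (n+1)) (s (n+2)) (h1 n).symm (h1 (n+1)).symm (h2 n).symm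
    rw [← hstep n, ← hstep (n+1), ← hstep (n+2)] at hco
    simpa [hpdef] using hco
  have hgeo : ∀ n, p n ≤ α ^ n * p 0 := by
    intro n
    induction n with
    | zero => simp
    | succ n ih =>
      calc p (n+1) ≤ α * p n := hcontr n
        _ ≤ α * (α ^ n * p 0) := by
            exact mul_le_mul_of_nonneg_left ih hα0
        _ = α ^ (n+1) * p 0 := by ring
  have hd : ∀ n, dist (s n) (s (n+1)) ≤ p 0 * α ^ n := by
    intro n
    have h3 : (0:ℝ) ≤ dist (s (n+1)) (s (n+2)) := dist_nonneg
    have h4 : (0:ℝ) ≤ dist (s (n+2)) (s n) := dist_nonneg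
    calc dist (s n) (s (n+1)) ≤ p n := by simp only [hpdef]; linarith
      _ ≤ α ^ n * p 0 := hgeo n
      _ = p 0 * α ^ n := mul_comm _ _
  have hcauchy : CauchySeq s := cauchySeq_of_le_geometric α (p 0) hα1 hd
  obtain ⟨x, hx⟩ := cauchySeq_tendsto_of_complete hcauchy
  have hpow0 : Filter.Tendsto (fun n => p 0 * α ^ n) Filter.atTop (nhds 0) := by
    have := (tendsto_pow_atTop_nhds_zero_of_lt_one hα0 hα1).const_mul (p 0)
    simpa using this
  have hdist0 : Filter.Tendsto (fun n => dist (s n) (s (n+1))) Filter.atTop (nhds 0) :=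
    squeeze_zero (fun n => dist_nonneg) hd hpow0
  -- the orbit never repeats
  have key : ∀ n m : ℕ, n < m → s n ≠ s m := by
    intro n m hnm heq
    set q := m - n with hq
    have hq1 : 1 ≤ q := by omega
    have hm : m = n + q := by omega
    have claim : ∀ j, s (n + j + q) = s (n + j) := by
      intro j
      induction j with
      | zero => simpa [← hm] using heq.symm
      | succ j ih =>
        have e1 : n + (j+1) + q = (n + j + q) + 1 := by omega
        rw [e1, hstep, ih, ← hstep]
        exact congrArg s (by omega)
    have claim2 : ∀ i, s (n + i*q) = s n ∧ s (n + i*q + 1) = s (n + 1) := by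
      intro i
      induction i with
      | zero => simp
      | succ i ih =>
        constructor
        · have e1 : n + (i+1)*q = n + i*q + q := by ring
          rw [e1, claim (i*q), ih.1]
        · have e1 : n + (i+1)*q + 1 = n + (i*q+1) + q := by ring
          have e2 : n + (i*q+1) = n + i*q + 1 := by ring
          rw [e1, claim (i*q+1), e2, ih.2]
    have dpos : 0 < dist (s n) (s (n+1)) := dist_pos.mpr (h1 n).symm
    have hev : ∀ᶠ k in Filter.atTop, dist (s k) (s (k+1)) < dist (s n) (s (n+1)) :=
      hdist0.eventually (gt_mem_nhds dpos)
    obtain ⟨K, hK⟩ := Filter.eventually_atTop.mp hev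
    have hk : K ≤ n + K*q := by
      have : K ≤ K * q := Nat.le_mul_of_pos_right K (by omega)
      omega
    have := hK (n + K*q) hk
    rw [(claim2 K).1, (claim2 K).2] at this
    exact lt_irrefl _ this
  -- eventually s n ≠ x
  have hN : ∃ N, ∀ n ≥ N, s n ≠ x := by
    by_contra h
    push_neg at h
    obtain ⟨n, -, hn⟩ := h 0
    obtain ⟨m, hm1, hm2⟩ := h (n+1)
    exact key n m (by omega) (by rw [hn, hm2])
  obtain ⟨N, hNe⟩ := hN
  -- show T x = x
  have hle : ∀ n ≥ N, dist x (T x) ≤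
      dist x (s (n+1)) + α * (dist x (s n) + dist (s n) (s (n+1)) + dist (s (n+1)) x) := by
    intro n hn
    have hxn : x ≠ s n := (hNe n hn).symm
    have hxn1 : x ≠ s (n+1) := (hNe (n+1) (by omega)).symm
    have hco := hc x (s n) (s (n+1)) hxn (h1 n).symm hxn1
    rw [← hstep n, ← hstep (n+1)] at hco
    have t1 := dist_triangle x (s (n+1)) (T x)
    have t2 : dist (s (n+1)) (T x) = dist (T x) (s (n+1)) := dist_comm _ _
    have t3 : (0:ℝ) ≤ dist (s (n+1)) (s (n+2)) := dist_nonneg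
    have t4 : (0:ℝ) ≤ dist (s (n+2)) (T x) := dist_nonneg
    linarith
  have hxs : Filter.Tendsto (fun n => dist x (s n)) Filter.atTop (nhds 0) := by
    have := (tendsto_const_nhds (x := x) (f := Filter.atTop (α := ℕ))).dist hx
    simpa using this
  have hxs1 : Filter.Tendsto (fun n => dist x (s (n+1))) Filter.atTop (nhds 0) :=
    hxs.comp (Filter.tendsto_add_atTop_nat 1)
  have hsx1 : Filter.Tendsto (fun n => dist (s (n+1)) x) Filter.atTop (nhds 0) := by
    simpa [dist_comm] using hxs1
  have hg : Filter.Tendsto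
      (fun n => dist x (s (n+1)) + α * (dist x (s n) + dist (s n) (s (n+1)) + dist (s (n+1)) x))
      Filter.atTop (nhds 0) := by
    have := hxs1.add ((( hxs.add hdist0).add hsx1).const_mul α)
    simpa using this
  have hfinal : dist x (T x) ≤ 0 :=
    ge_of_tendsto hg (Filter.eventually_atTop.mpr ⟨N, hle⟩)
  have : dist x (T x) = 0 := le_antisymm hfinal dist_nonneg
  exact ⟨x, (dist_eq_zero.mp this).symm⟩
end

section
/- Let (X,d) be a metric space with at least three points and let T : X → X be a mapping contracting perimeters of triangles on X. Then T has at most two fixed points. -/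
open Metric Filter Topology Set

theorem stmt3 {X : Type*} [MetricSpace X]
    (hX : ∃ x y z : X, x ≠ y ∧ y ≠ z ∧ x ≠ z)
    (T : X → X)
    (hT : ∃ α : ℝ, 0 ≤ α ∧ α < 1 ∧ ∀ x y z : X, x ≠ y → y ≠ z → x ≠ z →
      dist (T x) (T y) + dist (T y) (T z) + dist (T z) (T x) ≤
        α * (dist x y + dist y z + dist z x)) :
    ¬ ∃ x y z : X, x ≠ y ∧ y ≠ z ∧ x ≠ z ∧ T x = x ∧ T y = y ∧ T z = z := by
  rintro ⟨x, y, z, hxy, hyz, hxz, fx, fy, fz⟩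
  obtain ⟨α, hα0, hα1, hc⟩ := hT
  have h := hc x y z hxy hyz hxz
  rw [fx, fy, fz] at h
  have hp : 0 < dist x y + dist y z + dist z x := by
    have := dist_pos.mpr hxy
    have := dist_nonneg (x := y) (y := z)
    have := dist_nonneg (x := z) (y := x)
    linarith
  nlinarith
end

section
/- Let (X,d) be a complete metric space and let A, B be nonempty closed subsets of X such that A is approximatively compact with respect to B. Suppose that the set A_0 = {x ∈ A : d(x,y) = d(A,B) for some y ∈ B} has at least three elements, and let T : A → B be a continuous perimetric proximal contraction of the second kind such that T(A_0) ⊆ B_0, where B_0 = {y ∈ B : d(x,y) = d(A,B) for some x ∈ A}. If T satisfies Condition Λ, then there exists a point u ∈ A with d(u, Tu) = d(A,B), i.e., T possesses a best proximity point. -/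
open Metric Filter Topology Set

theorem stmt4 {X : Type*} [MetricSpace X] [CompleteSpace X]
    (A B : Set X) (hA : A.Nonempty) (hB : B.Nonempty)
    (hAc : IsClosed A) (hBc : IsClosed B)
    (hAcomp : ApproxCompactWRT A B)
    (T : X → X) (hTmaps : Set.MapsTo T A B) (hTcont : ContinuousOn T A)
    (hT : ∃ α : ℝ, 0 ≤ α ∧ α < 1 ∧ PerimProxContrSecond A B T α)
    (A₀ : Set X) (hA₀ : A₀ = {x ∈ A | ∃ y ∈ B, dist x y = setDist A B})
    (B₀ : Set X) (hB₀ : B₀ = {y ∈ B | ∃ x ∈ A, dist x y = setDist A B})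
    (hcard : ∃ a ∈ A₀, ∃ b ∈ A₀, ∃ c ∈ A₀, a ≠ b ∧ a ≠ c ∧ b ≠ c)
    (hTA₀ : Set.MapsTo T A₀ B₀)
    (hΛ : CondLambda A B T) :
    ∃ u ∈ A, dist u (T u) = setDist A B := by

  classical
  obtain ⟨α, hα0, hα1, hcontr⟩ := hT
  -- basic facts about setDist
  have hsd_le : ∀ a ∈ A, ∀ b ∈ B, setDist A B ≤ dist a b := by
    intro a ha b hb
    apply csInf_le
    · refine ⟨0, ?_⟩
      rintro z ⟨a', _, b', _, rfl⟩
      exact dist_nonneg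
    · exact Set.mem_image2_of_mem ha hb
  obtain ⟨x₀, hx₀, -⟩ := hcard
  -- construction step
  have hstep : ∀ x ∈ A₀, ∃ x', x' ∈ A₀ ∧ dist x' (T x) = setDist A B := by
    intro x hx
    have hTx := hTA₀ hx
    rw [hB₀] at hTx
    obtain ⟨hTxB, a, haA, hd⟩ := hTx
    refine ⟨a, ?_, hd⟩
    rw [hA₀]
    exact ⟨haA, T x, hTxB, hd⟩
  let F : X → X := fun x => if h : x ∈ A₀ then (hstep x h).choose else x
  have hF : ∀ x (h : x ∈ A₀), F x ∈ A₀ ∧ dist (F x) (T x) = setDist A B := by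
    intro x h
    simp only [F, dif_pos h]
    exact (hstep x h).choose_spec
  set s : ℕ → X := fun n => F^[n] x₀ with hsdef
  have hs_succ : ∀ n, s (n + 1) = F (s n) := fun n => Function.iterate_succ_apply' F n x₀
  have hsA₀ : ∀ n, s n ∈ A₀ := by
    intro n
    induction n with
    | zero => exact hx₀
    | succ n ih => rw [hs_succ]; exact (hF _ ih).1
  have hsd : ∀ n, dist (s (n + 1)) (T (s n)) = setDist A B := by
    intro n
    rw [hs_succ]
    exact (hF _ (hsA₀ n)).2
  have hsA : ∀ n, s n ∈ A := by
    intro n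
    have h := hsA₀ n
    rw [hA₀] at h
    exact h.1
  by_cases hcase : ∃ n, T (s n) = T (s (n + 1))
  · obtain ⟨n, hn⟩ := hcase
    exact ⟨s (n + 1), hsA (n + 1), by rw [← hn]; exact hsd n⟩
  push_neg at hcase
  have hne2 : ∀ n, T (s n) ≠ T (s (n + 2)) := by
    intro n h
    by_cases hx : s (n + 1) = s (n + 2)
    · exact hcase (n + 1) (by rw [hx])
    · exact hΛ ⟨s (n + 1), hsA _, s (n + 2), hsA _, hx,
        by rw [← h]; exact hsd n, hsd (n + 1)⟩
  set p : ℕ → ℝ := fun n => dist (T (s n)) (T (s (n + 1))) +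
    dist (T (s (n + 1))) (T (s (n + 2))) + dist (T (s (n + 2))) (T (s n)) with hpdef
  have hp : ∀ n, p (n + 1) ≤ α * p n := by
    intro n
    have := hcontr (s (n + 1)) (hsA _) (s (n + 2)) (hsA _) (s (n + 3)) (hsA _)
      (s n) (hsA _) (s (n + 1)) (hsA _) (s (n + 2)) (hsA _)
      (hcase n) (hcase (n + 1)) (hne2 n) (hsd n) (hsd (n + 1)) (hsd (n + 2))
    calc p (n + 1) = dist (T (s (n + 1))) (T (s (n + 2))) +
        dist (T (s (n + 2))) (T (s (n + 3))) + dist (T (s (n + 3))) (T (s (n + 1))) := rfl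
      _ ≤ α * (dist (T (s n)) (T (s (n + 1))) + dist (T (s (n + 1))) (T (s (n + 2))) +
          dist (T (s (n + 2))) (T (s n))) := this
      _ = α * p n := rfl
  have hpgeo : ∀ n, p n ≤ p 0 * α ^ n := by
    intro n
    induction n with
    | zero => simp
    | succ n ih =>
        calc p (n + 1) ≤ α * p n := hp n
          _ ≤ α * (p 0 * α ^ n) := by
              exact mul_le_mul_of_nonneg_left ih hα0
          _ = p 0 * α ^ (n + 1) := by ring
  have hcauchy : CauchySeq (fun n => T (s n)) := by
    apply cauchySeq_of_le_geometric α (p 0) hα1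
    intro n
    calc dist (T (s n)) (T (s (n + 1))) ≤ p n := by
          have h1 : (0:ℝ) ≤ dist (T (s (n + 1))) (T (s (n + 2))) := dist_nonneg
          have h2 : (0:ℝ) ≤ dist (T (s (n + 2))) (T (s n)) := dist_nonneg
          simp only [hpdef]
          linarith
      _ ≤ p 0 * α ^ n := hpgeo n
  obtain ⟨y, hy⟩ := cauchySeq_tendsto_of_complete hcauchy
  have hyB : y ∈ B := hBc.mem_of_tendsto hy
    (Filter.Eventually.of_forall fun n => hTmaps (hsA n))
  have hdist0 : Tendsto (fun n => dist y (T (s n))) atTop (nhds 0) := by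
    have := Filter.Tendsto.dist (tendsto_const_nhds (x := y)) hy
    simpa using this
  have htend : Tendsto (fun n => dist y (s (n + 1))) atTop (nhds (setDist A B)) := by
    apply tendsto_of_tendsto_of_tendsto_of_le_of_le (g := fun _ => setDist A B)
      (h := fun n => dist y (T (s n)) + setDist A B) tendsto_const_nhds
    · have := hdist0.add (tendsto_const_nhds (x := setDist A B))
      simpa using this
    · intro n
      show setDist A B ≤ dist y (s (n + 1))
      rw [dist_comm]
      exact hsd_le _ (hsA (n + 1)) _ hyB
    · intro n
      show dist y (s (n + 1)) ≤ dist y (T (s n)) + setDist A B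
      calc dist y (s (n + 1)) ≤ dist y (T (s n)) + dist (T (s n)) (s (n + 1)) :=
            dist_triangle _ _ _
        _ = dist y (T (s n)) + setDist A B := by rw [dist_comm (T (s n)), hsd n]
  have hinf : Metric.infDist y A = setDist A B := by
    apply le_antisymm
    · exact ge_of_tendsto htend (Filter.Eventually.of_forall fun n =>
        Metric.infDist_le_dist_of_mem (hsA (n + 1)))
    · by_contra h
      push_neg at h
      obtain ⟨a, haA, hlt⟩ := (Metric.infDist_lt_iff hA).mp h
      have := hsd_le a haA y hyB
      rw [dist_comm] at hlt
      linarith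
  obtain ⟨v, φ, hφ, hvt⟩ := hAcomp y hyB (fun n => s (n + 1)) (fun n => hsA (n + 1))
    (by rw [hinf]; exact htend)
  have hvt' : Tendsto (fun n => s (φ n + 1)) atTop (nhds v) := hvt
  have hvA : v ∈ A := hAc.mem_of_tendsto hvt'
    (Filter.Eventually.of_forall fun n => hsA _)
  have hφtop : Tendsto φ atTop atTop := hφ.tendsto_atTop
  have hTφ : Tendsto (fun n => T (s (φ n))) atTop (nhds y) := hy.comp hφtop
  have hdv : dist v y = setDist A B := by
    have h1 : Tendsto (fun n => dist (s (φ n + 1)) (T (s (φ n)))) atTop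
        (nhds (dist v y)) := hvt'.dist hTφ
    have h2 : Tendsto (fun n => dist (s (φ n + 1)) (T (s (φ n)))) atTop
        (nhds (setDist A B)) := by
      have : (fun n => dist (s (φ n + 1)) (T (s (φ n)))) = fun _ => setDist A B := by
        funext n; exact hsd (φ n)
      rw [this]; exact tendsto_const_nhds
    exact tendsto_nhds_unique h1 h2
  have hφ1top : Tendsto (fun n => φ n + 1) atTop atTop :=
    tendsto_atTop_mono (fun n => Nat.le_succ _) hφtop
  have hTφ1 : Tendsto (fun n => T (s (φ n + 1))) atTop (nhds y) := hy.comp hφ1top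
  have hmem : Tendsto (fun n => s (φ n + 1)) atTop (nhdsWithin v A) :=
    tendsto_nhdsWithin_of_tendsto_nhds_of_eventually_within _ hvt'
      (Filter.Eventually.of_forall fun n => hsA _)
  have hTv : Tendsto (fun n => T (s (φ n + 1))) atTop (nhds (T v)) :=
    (hTcont v hvA).tendsto.comp hmem
  have hTveq : T v = y := tendsto_nhds_unique hTv hTφ1
  exact ⟨v, hvA, by rw [hTveq, hdv]⟩
end

section
/- Let (X,d) be a metric space, let A, B be nonempty subsets of X, and let T : A → B be an injective perimetric proximal contraction of the second kind. Then T has at most two best proximity points; that is, there do not exist three pairwise distinct points x, y, z ∈ A with d(x,Tx) = d(y,Ty) = d(z,Tz) = d(A,B). -/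
open Metric Filter Topology Set

theorem stmt5 {X : Type*} [MetricSpace X]
    (A B : Set X) (hA : A.Nonempty) (hB : B.Nonempty)
    (T : X → X) (hTmaps : Set.MapsTo T A B) (hTinj : Set.InjOn T A)
    (hT : ∃ α : ℝ, 0 ≤ α ∧ α < 1 ∧ PerimProxContrSecond A B T α) :
    ¬ ∃ x ∈ A, ∃ y ∈ A, ∃ z ∈ A, x ≠ y ∧ y ≠ z ∧ x ≠ z ∧
        dist x (T x) = setDist A B ∧ dist y (T y) = setDist A B ∧
        dist z (T z) = setDist A B := by
  rintro ⟨x, hx, y, hy, z, hz, hxy, hyz, hxz, hdx, hdy, hdz⟩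
  obtain ⟨α, hα0, hα1, hc⟩ := hT
  have hTxy : T x ≠ T y := fun h => hxy (hTinj hx hy h)
  have hTyz : T y ≠ T z := fun h => hyz (hTinj hy hz h)
  have hTxz : T x ≠ T z := fun h => hxz (hTinj hx hz h)
  have key := hc x hx y hy z hz x hx y hy z hz hTxy hTyz hTxz hdx hdy hdz
  have hP : 0 < dist (T x) (T y) + dist (T y) (T z) + dist (T z) (T x) := by
    have := dist_pos.mpr hTxy
    have := dist_nonneg (x := T y) (y := T z)
    have := dist_nonneg (x := T z) (y := T x)
    linarith
  have : dist (T z) (T x) = dist (T x) (T z) := dist_comm _ _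
  nlinarith
end

section
/- Let (X,d) be a complete metric space with at least three points and let T : X → X be a continuous mapping such that there exists α ∈ [0,1) with d(T²x,T²y)+d(T²y,T²z)+d(T²z,T²x) ≤ α( d(Tx,Ty)+d(Ty,Tz)+d(Tz,Tx) ) for all x, y, z ∈ X with Tx, Ty, Tz pairwise distinct. If T does not possess any periodic point of prime period 2, then T has a fixed point in X. -/
open Metric Filter Topology Set

theorem stmt6 {X : Type*} [MetricSpace X] [CompleteSpace X]
    (hX : ∃ x y z : X, x ≠ y ∧ y ≠ z ∧ x ≠ z)
    (T : X → X) (hTcont : Continuous T)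
    (hT : ∃ α : ℝ, 0 ≤ α ∧ α < 1 ∧ ∀ x y z : X,
      T x ≠ T y → T y ≠ T z → T x ≠ T z →
      dist (T (T x)) (T (T y)) + dist (T (T y)) (T (T z)) + dist (T (T z)) (T (T x)) ≤
        α * (dist (T x) (T y) + dist (T y) (T z) + dist (T z) (T x)))
    (hper : ¬ ∃ x : X, T (T x) = x ∧ T x ≠ x) :
    ∃ x : X, T x = x := by
  obtain ⟨x₀, -, -, -⟩ := hX
  obtain ⟨α, hα0, hα1, hcontr⟩ := hT
  by_contra hfix
  push_neg at hfix
  set x : ℕ → X := fun n => T^[n] x₀ with hxdef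
  have hsucc : ∀ n, x (n + 1) = T (x n) := fun n => Function.iterate_succ_apply' T n x₀
  have hne1 : ∀ n, x n ≠ x (n + 1) := by
    intro n h
    exact hfix (x n) ((hsucc n).symm.trans h.symm)
  have hne2 : ∀ n, x n ≠ x (n + 2) := by
    intro n h
    apply hper
    refine ⟨x n, ?_, fun h' => hfix (x n) h'⟩
    have h2 : x (n + 2) = T (T (x n)) := by rw [hsucc (n+1), hsucc n]
    rw [← h2, ← h]
  set P : ℕ → ℝ := fun n => dist (x n) (x (n+1)) + dist (x (n+1)) (x (n+2)) + dist (x (n+2)) (x n) with hPdef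
  have hP : ∀ n, P (n + 2) ≤ α * P (n + 1) := by
    intro n
    have s1 : T (x n) = x (n+1) := (hsucc n).symm
    have s2 : T (x (n+1)) = x (n+2) := (hsucc (n+1)).symm
    have s3 : T (x (n+2)) = x (n+3) := (hsucc (n+2)).symm
    have e1 : T (T (x n)) = x (n+2) := by rw [hsucc (n+1), hsucc n]
    have e2 : T (T (x (n+1))) = x (n+3) := by rw [hsucc (n+2), hsucc (n+1)]
    have e3 : T (T (x (n+2))) = x (n+4) := by rw [hsucc (n+3), hsucc (n+2)]
    have key := hcontr (x n) (x (n+1)) (x (n+2)) ?_ ?_ ?_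
    · rw [e1, e2, e3, s1, s2, s3] at key
      simp only [hPdef]
      have c1 : dist (x (n+4)) (x (n+2)) = dist (x (n+2)) (x (n+4)) := dist_comm _ _
      have c2 : dist (x (n+3)) (x (n+1)) = dist (x (n+1)) (x (n+3)) := dist_comm _ _
      have hh : dist (x (n+2)) (x (n+3)) + dist (x (n+3)) (x (n+4)) + dist (x (n+4)) (x (n+2)) ≤
          α * (dist (x (n+1)) (x (n+2)) + dist (x (n+2)) (x (n+3)) + dist (x (n+3)) (x (n+1))) := key
      exact hh
    · rw [s1, s2]; exact hne1 (n+1)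
    · rw [s2, s3]; exact hne1 (n+2)
    · rw [s1, s3]; exact hne2 (n+1)
  have hPgeom : ∀ n, P (n + 1) ≤ P 1 * α ^ n := by
    intro n
    induction n with
    | zero => simp
    | succ k ih =>
      calc P (k+1+1) ≤ α * P (k+1) := hP k
        _ ≤ α * (P 1 * α ^ k) := mul_le_mul_of_nonneg_left ih hα0
        _ = P 1 * α ^ (k+1) := by ring
  have hdist : ∀ n, dist (x (n+1)) (x (n+1+1)) ≤ P 1 * α ^ n := by
    intro n
    have h1 := dist_nonneg (x := x (n+2)) (y := x (n+3))
    have h2 := dist_nonneg (x := x (n+3)) (y := x (n+1))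
    have hd : dist (x (n+1)) (x (n+2)) ≤ P (n+1) := by
      have : P (n+1) = dist (x (n+1)) (x (n+2)) + dist (x (n+2)) (x (n+3)) + dist (x (n+3)) (x (n+1)) := rfl
      linarith [this.ge]
    exact le_trans hd (hPgeom n)
  have hcauchy : CauchySeq (fun n => x (n + 1)) :=
    cauchySeq_of_le_geometric α (P 1) hα1 hdist
  obtain ⟨p, hp⟩ := cauchySeq_tendsto_of_complete hcauchy
  have h1 : Filter.Tendsto (fun n => T (x (n + 1))) Filter.atTop (nhds (T p)) :=
    (hTcont.tendsto p).comp hp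
  have h2 : Filter.Tendsto (fun n => x (n + 1 + 1)) Filter.atTop (nhds p) :=
    hp.comp (Filter.tendsto_add_atTop_nat 1)
  have h3 : Filter.Tendsto (fun n => T (x (n + 1))) Filter.atTop (nhds p) := by
    simpa only [hsucc] using h2
  exact hfix p (tendsto_nhds_unique h1 h3)
end

section
/- Let (X,d) be a metric space, let A, B be nonempty subsets of X, and let T : A → B be a perimetric proximal contraction of the first kind with constant α ∈ [0,1). Let {u_n} be a sequence in A such that d(u_{n+1}, Tu_n) = d(A,B) for all n and such that for every n the three points u_n, u_{n+1}, u_{n+2} are pairwise distinct. Then, writing t_n = d(u_n,u_{n+1}) + d(u_{n+1},u_{n+2}) + d(u_{n+2},u_n), one has t_{n+1} ≤ α t_n for all n, hence d(u_{n+1}, u_{n+2}) ≤ α^n t_1 for all n, and consequently {u_n} is a Cauchy sequence. -/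
open Metric Filter Topology Set

theorem stmt9 {X : Type*} [MetricSpace X]
    (A B : Set X) (hA : A.Nonempty) (hB : B.Nonempty)
    (T : X → X) (hTmaps : Set.MapsTo T A B)
    (α : ℝ) (hα0 : 0 ≤ α) (hα1 : α < 1)
    (hT : PerimProxContrFirst A B T α)
    (u : ℕ → X) (hu : ∀ n, u n ∈ A)
    (hprox : ∀ n, dist (u (n + 1)) (T (u n)) = setDist A B)
    (hdist : ∀ n, u n ≠ u (n + 1) ∧ u (n + 1) ≠ u (n + 2) ∧ u n ≠ u (n + 2))
    (t : ℕ → ℝ)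
    (ht : ∀ n, t n = dist (u n) (u (n + 1)) + dist (u (n + 1)) (u (n + 2)) +
      dist (u (n + 2)) (u n)) :
    (∀ n, t (n + 1) ≤ α * t n) ∧
    (∀ n, dist (u (n + 1)) (u (n + 2)) ≤ α ^ n * t 1) ∧
    CauchySeq u := by
  have key : ∀ n, t (n + 1) ≤ α * t n := by
    intro n
    have h := hT (u (n + 1)) (hu _) (u (n + 2)) (hu _) (u (n + 3)) (hu _)
      (u n) (hu _) (u (n + 1)) (hu _) (u (n + 2)) (hu _)
      (hdist n).1 (hdist (n + 1)).1 (hdist n).2.2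
      (hprox n) (hprox (n + 1)) (hprox (n + 2))
    rw [ht (n + 1), ht n]
    exact h
  have key2 : ∀ n, t (n + 1) ≤ α ^ n * t 1 := by
    intro n
    induction n with
    | zero => simp
    | succ k ih =>
      calc t (k + 2) ≤ α * t (k + 1) := key (k + 1)
        _ ≤ α * (α ^ k * t 1) := by
            exact mul_le_mul_of_nonneg_left ih hα0
        _ = α ^ (k + 1) * t 1 := by ring
  have key3 : ∀ n, dist (u (n + 1)) (u (n + 2)) ≤ α ^ n * t 1 := by
    intro n
    refine le_trans ?_ (key2 n)
    rw [ht (n + 1)]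
    have := dist_nonneg (x := u (n + 2)) (y := u (n + 3))
    have := dist_nonneg (x := u (n + 3)) (y := u (n + 1))
    linarith
  refine ⟨key, key3, ?_⟩
  rw [← cauchySeq_shift 1]
  apply cauchySeq_of_le_geometric α (t 1) hα1
  intro n
  calc dist (u (n + 1)) (u (n + 1 + 1)) ≤ α ^ n * t 1 := key3 n
    _ = t 1 * α ^ n := mul_comm _ _
end

section
/- In the metric space ℝ with the Euclidean distance, let A = {7 + 4n : n = 0, 1, 2, ...} and B = {2n : n = 1, 2, 3, ...}, and let T : A → B be defined by T(7) = 6, T(11) = 12, and T(7 + 4n) = 2n + 2 for n ≥ 2. Then d(A,B) = 1 and T is a perimetric proximal contraction of the first kind with constant α = 2/3. -/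
open Metric Filter Topology Set

set_option maxHeartbeats 2000000 in
lemma key_nat (n1 n2 n3 k1 k2 k3 : ℕ) (h12 : n1 ≠ n2) (h23 : n2 ≠ n3) (h13 : n1 ≠ n3)
    (p1 : (n1 = 0 ∧ k1 = 0) ∨ (n1 = 1 ∧ k1 = 1) ∨ (2 ≤ n1 ∧ (2*n1 = 4*k1+4 ∨ 2*n1 = 4*k1+6)))
    (p2 : (n2 = 0 ∧ k2 = 0) ∨ (n2 = 1 ∧ k2 = 1) ∨ (2 ≤ n2 ∧ (2*n2 = 4*k2+4 ∨ 2*n2 = 4*k2+6)))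
    (p3 : (n3 = 0 ∧ k3 = 0) ∨ (n3 = 1 ∧ k3 = 1) ∨ (2 ≤ n3 ∧ (2*n3 = 4*k3+4 ∨ 2*n3 = 4*k3+6))) :
    3 * (((k1-k2)+(k2-k1)) + ((k2-k3)+(k3-k2)) + ((k3-k1)+(k1-k3))) ≤
      2 * (((n1-n2)+(n2-n1)) + ((n2-n3)+(n3-n2)) + ((n3-n1)+(n1-n3))) := by
  rcases p1 with ⟨q,r⟩|⟨q,r⟩|⟨q,r⟩ <;> rcases p2 with ⟨s,t⟩|⟨s,t⟩|⟨s,t⟩ <;>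
    rcases p3 with ⟨v,w⟩|⟨v,w⟩|⟨v,w⟩ <;> omega

lemma abs_cast_nat (a b : ℕ) : |(a:ℝ) - (b:ℝ)| = (((a-b)+(b-a) : ℕ) : ℝ) := by
  rcases le_total a b with h | h
  · rw [Nat.sub_eq_zero_of_le h, zero_add, Nat.cast_sub h, abs_sub_comm,
      abs_of_nonneg (sub_nonneg.mpr (Nat.cast_le.mpr h))]
  · rw [Nat.sub_eq_zero_of_le h, add_zero, Nat.cast_sub h,
      abs_of_nonneg (sub_nonneg.mpr (Nat.cast_le.mpr h))]

lemma char_lemma (T : ℝ → ℝ) (h7 : T 7 = 6) (h11 : T 11 = 12)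
    (hn : ∀ n : ℕ, 2 ≤ n → T (7 + 4 * (n : ℝ)) = 2 * (n : ℝ) + 2)
    (k n : ℕ) (h : dist ((7:ℝ) + 4 * k) (T (7 + 4 * (n:ℝ))) = 1) :
    (n = 0 ∧ k = 0) ∨ (n = 1 ∧ k = 1) ∨ (2 ≤ n ∧ (2*n = 4*k+4 ∨ 2*n = 4*k+6)) := by
  rw [Real.dist_eq] at h
  match n with
  | 0 =>
    left
    norm_num [h7] at h
    rcases (abs_eq (by norm_num : (0:ℝ) ≤ 1)).mp h with h' | h'
    · refine ⟨rfl, ?_⟩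
      have hk : (k:ℝ) = 0 := by linarith
      exact_mod_cast hk
    · exfalso
      have : (0:ℝ) ≤ 4 * (k:ℝ) := by positivity
      linarith
  | 1 =>
    right; left
    norm_num [h11] at h
    rcases (abs_eq (by norm_num : (0:ℝ) ≤ 1)).mp h with h' | h'
    · exfalso
      have hre : ((2*k : ℕ) : ℝ) = ((3:ℕ) : ℝ) := by push_cast; linarith
      have : (2*k : ℕ) = 3 := by exact_mod_cast hre
      omega
    · refine ⟨rfl, ?_⟩
      have hk : (k:ℝ) = 1 := by linarith
      exact_mod_cast hk
  | (m+2) =>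
    right; right
    refine ⟨by omega, ?_⟩
    rw [hn (m+2) (by omega)] at h
    rcases (abs_eq (by norm_num : (0:ℝ) ≤ 1)).mp h with h' | h'
    · left
      have hre : ((2*(m+2) : ℕ) : ℝ) = ((4*k+4 : ℕ) : ℝ) := by push_cast at h' ⊢; linarith
      have : (2*(m+2) : ℕ) = 4*k+4 := by exact_mod_cast hre
      omega
    · right
      have hre : ((2*(m+2) : ℕ) : ℝ) = ((4*k+6 : ℕ) : ℝ) := by push_cast at h' ⊢; linarith
      have : (2*(m+2) : ℕ) = 4*k+6 := by exact_mod_cast hre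
      omega

theorem stmt15 (T : ℝ → ℝ)
    (h7 : T 7 = 6) (h11 : T 11 = 12)
    (hn : ∀ n : ℕ, 2 ≤ n → T (7 + 4 * (n : ℝ)) = 2 * (n : ℝ) + 2)
    (A B : Set ℝ)
    (hA : A = {x : ℝ | ∃ n : ℕ, x = 7 + 4 * (n : ℝ)})
    (hB : B = {x : ℝ | ∃ n : ℕ, 1 ≤ n ∧ x = 2 * (n : ℝ)}) :
    setDist A B = 1 ∧ PerimProxContrFirst A B T (2 / 3) := by
  have hA6 : (6:ℝ) ∈ B := by rw [hB]; exact ⟨3, by norm_num⟩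
  have hA7 : (7:ℝ) ∈ A := by rw [hA]; exact ⟨0, by norm_num⟩
  have hmem : (1:ℝ) ∈ Set.image2 dist A B := by
    refine ⟨7, hA7, 6, hA6, ?_⟩
    rw [Real.dist_eq]; norm_num
  have hlb : ∀ z ∈ Set.image2 dist A B, (1:ℝ) ≤ z := by
    rintro z ⟨a, ha, b, hb, rfl⟩
    rw [hA] at ha; rw [hB] at hb
    obtain ⟨n, rfl⟩ := ha
    obtain ⟨m, hm, rfl⟩ := hb
    rw [Real.dist_eq]
    have hz : ((7 + 4*(n:ℤ) - 2*(m:ℤ) : ℤ) : ℝ) = 7 + 4*(n:ℝ) - 2*(m:ℝ) := by push_cast; ring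
    rw [← hz, ← Int.cast_abs]
    have : (1:ℤ) ≤ |7 + 4*(n:ℤ) - 2*(m:ℤ)| := by
      rcases abs_cases (7 + 4*(n:ℤ) - 2*(m:ℤ)) with ⟨he, _⟩ | ⟨he, _⟩ <;> omega
    exact_mod_cast this
  have hd : setDist A B = 1 := by
    unfold setDist
    apply le_antisymm
    · exact csInf_le ⟨0, fun z hz => by
        obtain ⟨a, _, b, _, rfl⟩ := hz; exact dist_nonneg⟩ hmem
    · exact le_csInf ⟨1, hmem⟩ hlb
  refine ⟨hd, ?_⟩
  intro u₁ hu₁ u₂ hu₂ u₃ hu₃ x₁ hx₁ x₂ hx₂ x₃ hx₃ hx12 hx23 hx13 e1 e2 e3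
  rw [hd] at e1 e2 e3
  rw [hA] at hu₁ hu₂ hu₃ hx₁ hx₂ hx₃
  obtain ⟨k1, rfl⟩ := hu₁
  obtain ⟨k2, rfl⟩ := hu₂
  obtain ⟨k3, rfl⟩ := hu₃
  obtain ⟨n1, rfl⟩ := hx₁
  obtain ⟨n2, rfl⟩ := hx₂
  obtain ⟨n3, rfl⟩ := hx₃
  have p1 := char_lemma T h7 h11 hn k1 n1 e1
  have p2 := char_lemma T h7 h11 hn k2 n2 e2
  have p3 := char_lemma T h7 h11 hn k3 n3 e3
  have hn12 : n1 ≠ n2 := by rintro rfl; exact hx12 rfl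
  have hn23 : n2 ≠ n3 := by rintro rfl; exact hx23 rfl
  have hn13 : n1 ≠ n3 := by rintro rfl; exact hx13 rfl
  have keyn := key_nat n1 n2 n3 k1 k2 k3 hn12 hn23 hn13 p1 p2 p3
  have keyr : (3:ℝ) * (((k1-k2)+(k2-k1) : ℕ) + ((k2-k3)+(k3-k2) : ℕ) + ((k3-k1)+(k1-k3) : ℕ)) ≤
      (2:ℝ) * (((n1-n2)+(n2-n1) : ℕ) + ((n2-n3)+(n3-n2) : ℕ) + ((n3-n1)+(n1-n3) : ℕ)) := by
    have := (Nat.cast_le (α := ℝ)).mpr keyn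
    push_cast at this ⊢
    linarith
  have dk12 : dist ((7:ℝ) + 4*k1) (7 + 4*k2) = 4 * (((k1-k2)+(k2-k1) : ℕ) : ℝ) := by
    rw [Real.dist_eq, ← abs_cast_nat]
    rw [show (7:ℝ) + 4*k1 - (7 + 4*k2) = 4 * ((k1:ℝ) - k2) by ring, abs_mul]
    norm_num
  have dk23 : dist ((7:ℝ) + 4*k2) (7 + 4*k3) = 4 * (((k2-k3)+(k3-k2) : ℕ) : ℝ) := by
    rw [Real.dist_eq, ← abs_cast_nat]
    rw [show (7:ℝ) + 4*k2 - (7 + 4*k3) = 4 * ((k2:ℝ) - k3) by ring, abs_mul]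
    norm_num
  have dk31 : dist ((7:ℝ) + 4*k3) (7 + 4*k1) = 4 * (((k3-k1)+(k1-k3) : ℕ) : ℝ) := by
    rw [Real.dist_eq, ← abs_cast_nat]
    rw [show (7:ℝ) + 4*k3 - (7 + 4*k1) = 4 * ((k3:ℝ) - k1) by ring, abs_mul]
    norm_num
  have dn12 : dist ((7:ℝ) + 4*n1) (7 + 4*n2) = 4 * (((n1-n2)+(n2-n1) : ℕ) : ℝ) := by
    rw [Real.dist_eq, ← abs_cast_nat]
    rw [show (7:ℝ) + 4*n1 - (7 + 4*n2) = 4 * ((n1:ℝ) - n2) by ring, abs_mul]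
    norm_num
  have dn23 : dist ((7:ℝ) + 4*n2) (7 + 4*n3) = 4 * (((n2-n3)+(n3-n2) : ℕ) : ℝ) := by
    rw [Real.dist_eq, ← abs_cast_nat]
    rw [show (7:ℝ) + 4*n2 - (7 + 4*n3) = 4 * ((n2:ℝ) - n3) by ring, abs_mul]
    norm_num
  have dn31 : dist ((7:ℝ) + 4*n3) (7 + 4*n1) = 4 * (((n3-n1)+(n1-n3) : ℕ) : ℝ) := by
    rw [Real.dist_eq, ← abs_cast_nat]
    rw [show (7:ℝ) + 4*n3 - (7 + 4*n1) = 4 * ((n3:ℝ) - n1) by ring, abs_mul]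
    norm_num
  rw [dk12, dk23, dk31, dn12, dn23, dn31]
  linarith
end
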